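/- arXiv:2301.12630 — 2 statements merged into one kernel-verified Lean document; each statement's English description precedes it below -/
import Mathlib

section
/- Correctness of the BET strategy: let q be a pattern with last item x. For any item y, every occurrence <l_1,...,l_m,l_{m+1}> of the extension q·y yields an occurrence <l_m, l_{m+1}> of the length-two pattern x[a,b]y, and a pairwise nonoverlapping family of occurrences of q·y maps to a pairwise nonoverlapping family of occurrences of x[a,b]y of the same size; consequently sup(q·y, D) ≤ sup(x[a,b]y, D), so if the two-item pattern xy is infrequent (support below minsup) then q·y is infrequent. -/
open Finset

variable {α : Type*}

/-- `l` is an occurrence of the pattern `p` (with gap constraint `[a,b]`) in the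
sequence `s` of length `n`: positions are within the sequence, match the pattern,
are strictly increasing, and consecutive gaps lie in `[a,b]`. -/
def IsOcc (s : ℕ → α) (n : ℕ) {m : ℕ} (p : Fin m → α) (a b : ℕ) (l : Fin m → ℕ) : Prop :=
  (∀ j, l j < n) ∧ (∀ j, s (l j) = p j) ∧
  ∀ (i : ℕ) (h : i + 1 < m),
    l ⟨i, Nat.lt_of_succ_lt h⟩ < l ⟨i + 1, h⟩ ∧
    a ≤ l ⟨i + 1, h⟩ - l ⟨i, Nat.lt_of_succ_lt h⟩ - 1 ∧
    l ⟨i + 1, h⟩ - l ⟨i, Nat.lt_of_succ_lt h⟩ - 1 ≤ b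

/-- Two occurrences are nonoverlapping iff they differ at every coordinate. -/
def NonOverlap {m : ℕ} (l l' : Fin m → ℕ) : Prop := ∀ j, l j ≠ l' j

/-- `F` is a pairwise nonoverlapping family of occurrences of `p` in `s`. -/
def NOFamily (s : ℕ → α) (n : ℕ) {m : ℕ} (p : Fin m → α) (a b : ℕ)
    (F : Finset (Fin m → ℕ)) : Prop :=
  (∀ l ∈ F, IsOcc s n p a b l) ∧
  ∀ l ∈ F, ∀ l' ∈ F, l ≠ l' → NonOverlap l l'

/-- The nonoverlapping support of `p` in `s`: the maximum cardinality of a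
pairwise nonoverlapping family of occurrences. -/
noncomputable def supNO (s : ℕ → α) (n : ℕ) {m : ℕ} (p : Fin m → α) (a b : ℕ) : ℕ :=
  sSup {k | ∃ F : Finset (Fin m → ℕ), NOFamily s n p a b F ∧ F.card = k}

/-- Database support: sum of nonoverlapping supports over the sequences
(`D` is a list of pairs (sequence, length)). -/
noncomputable def supNOD (D : List ((ℕ → α) × ℕ)) {m : ℕ} (p : Fin m → α) (a b : ℕ) : ℕ :=
  (D.map fun sn => supNO sn.1 sn.2 p a b).sum


lemma card_le_of_NOFamily {s : ℕ → α} {n m : ℕ} {p : Fin (m + 1) → α} {a b : ℕ}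
    {F : Finset (Fin (m + 1) → ℕ)} (h : NOFamily s n p a b F) : F.card ≤ n := by
  classical
  have hinj : Set.InjOn (fun l : Fin (m + 1) → ℕ => l 0) F := by
    intro l hl l' hl' he
    by_contra hne
    exact h.2 l hl l' hl' hne 0 he
  have hcard : (F.image fun l => l 0).card = F.card :=
    Finset.card_image_of_injOn hinj
  rw [← hcard]
  have hsub : F.image (fun l => l 0) ⊆ Finset.range n := by
    intro x hx
    simp only [Finset.mem_image] at hx
    obtain ⟨l, hl, rfl⟩ := hx
    exact Finset.mem_range.mpr ((h.1 l hl).1 0)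
  simpa using Finset.card_le_card hsub

lemma supNO_ext_le (s : ℕ → α) (n : ℕ) {m : ℕ} (q : Fin (m + 1) → α) (y : α)
    (a b : ℕ) :
    supNO s n (Fin.append q (fun _ : Fin 1 => y)) a b
      ≤ supNO s n ![q (Fin.last m), y] a b := by
  classical
  apply csSup_le_csSup
  · refine ⟨n, ?_⟩
    rintro k ⟨F, hF, rfl⟩
    exact card_le_of_NOFamily (m := 1) hF
  · exact ⟨0, ∅, ⟨fun l hl => absurd hl (Finset.notMem_empty l),
      fun l hl => absurd hl (Finset.notMem_empty l)⟩, rfl⟩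
  · rintro k ⟨F, hF, rfl⟩
    set proj : (Fin (m + 1 + 1) → ℕ) → (Fin 2 → ℕ) :=
      fun l j => l ⟨m + j.val, by omega⟩ with hproj
    have hinj : Set.InjOn proj F := by
      intro l hl l' hl' he
      by_contra hne
      have h1 : l ⟨m + 1, by omega⟩ ≠ l' ⟨m + 1, by omega⟩ :=
        hF.2 l hl l' hl' hne ⟨m + 1, by omega⟩
      exact h1 (congrFun he 1)
    refine ⟨F.image proj, ⟨?_, ?_⟩, ?_⟩
    · intro g hg
      simp only [Finset.mem_image] at hg
      obtain ⟨l, hl, rfl⟩ := hg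
      obtain ⟨ho1, ho2, ho3⟩ := hF.1 l hl
      refine ⟨fun j => ho1 _, ?_, ?_⟩
      · intro j
        fin_cases j
        · have e1 : (⟨m + 0, by omega⟩ : Fin (m + 1 + 1))
              = Fin.castAdd 1 (Fin.last m) := by
            apply Fin.ext; simp
          have := ho2 ⟨m + 0, by omega⟩
          rw [e1, Fin.append_left] at this
          rw [← e1] at this
          simpa [proj] using this
        · have e1 : (⟨m + 1, by omega⟩ : Fin (m + 1 + 1))
              = Fin.natAdd (m + 1) (0 : Fin 1) := by
            apply Fin.ext; simp
          have := ho2 ⟨m + 1, by omega⟩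
          rw [e1, Fin.append_right] at this
          rw [← e1] at this
          simpa [proj] using this
      · intro i hi
        obtain rfl : i = 0 := by omega
        have := ho3 m (by omega)
        simpa [proj] using this
    · intro g hg g' hg' hne
      simp only [Finset.mem_image] at hg hg'
      obtain ⟨l, hl, rfl⟩ := hg
      obtain ⟨l', hl', rfl⟩ := hg'
      have hll : l ≠ l' := by rintro rfl; exact hne rfl
      intro j
      exact hF.2 l hl l' hl' hll ⟨m + j.val, by omega⟩
    · exact Finset.card_image_of_injOn hinj

theorem stmt7 {α : Type*} (D : List ((ℕ → α) × ℕ)) (a b : ℕ)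
    {m : ℕ} (q : Fin (m + 1) → α) (y : α) (minsup : ℕ) :
    supNOD D (Fin.append q (fun _ : Fin 1 => y)) a b
      ≤ supNOD D ![q (Fin.last m), y] a b ∧
    (supNOD D ![q (Fin.last m), y] a b < minsup →
      supNOD D (Fin.append q (fun _ : Fin 1 => y)) a b < minsup) := by
  have hle : supNOD D (Fin.append q (fun _ : Fin 1 => y)) a b
      ≤ supNOD D ![q (Fin.last m), y] a b := by
    unfold supNOD
    apply List.sum_le_sum
    intro sn _
    exact supNO_ext_le sn.1 sn.2 q y a b
  exact ⟨hle, fun h => lt_of_le_of_lt hle h⟩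
end

section
/- Transitivity/composition of support bounds: for any patterns p, r, w with the same gap constraint, sup(p·r·w, D) ≤ sup(p·r, D) ≤ sup(p, D). Consequently, if p → r is not a strong co-occurrence rule (conf(p → r) < mincf), then for every pattern w, p → r·w is also not a strong co-occurrence rule. -/
/-
Restricting an occurrence of `p·q` to its first `m` positions gives an occurrence of `p`, and two
nonoverlapping occurrences of `p·q` restrict to distinct nonoverlapping occurrences of `p` (they
already differ at the first position, which exists as `0 < m`). So every nonoverlapping family for
`p·q` yields one of the same size for `p`, whence `sup(p·q) ≤ sup(p)`, and the bound on confidences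
follows by dividing by `sup(p)`.
-/

open Finset

variable {α : Type*}

section

variable {s : ℕ → α} {n m k a b : ℕ} {p : Fin m → α} {q : Fin k → α}

def prefixOcc (l : Fin (m + k) → ℕ) : Fin m → ℕ := fun i => l (Fin.castAdd k i)

theorem IsOcc.prefixOcc {l : Fin (m + k) → ℕ} (hl : IsOcc s n (Fin.append p q) a b l) :
    IsOcc s n p a b (prefixOcc l) := by
  obtain ⟨h_lt, h_match, h_gap⟩ := hl
  refine ⟨fun i => h_lt _, fun i => (h_match _).trans (Fin.append_left p q i),
    fun i hi => h_gap i (by omega)⟩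

theorem NOFamily.image_prefixOcc (hm : 0 < m) {F : Finset (Fin (m + k) → ℕ)}
    (hF : NOFamily s n (Fin.append p q) a b F) :
    NOFamily s n p a b (F.image prefixOcc) ∧ (F.image prefixOcc).card = F.card := by
  obtain ⟨h_occ, h_disj⟩ := hF
  refine ⟨⟨?_, ?_⟩, card_image_of_injOn ?_⟩
  · simp only [mem_image, forall_exists_index, and_imp]
    rintro _ l hl rfl
    exact (h_occ l hl).prefixOcc
  · simp only [mem_image, forall_exists_index, and_imp]
    rintro _ l hl rfl _ l' hl' rfl hne i
    exact h_disj l hl l' hl' (fun h => hne (h ▸ rfl)) (Fin.castAdd k i)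
  · intro l hl l' hl' heq
    by_contra hne
    exact h_disj l hl l' hl' hne (Fin.castAdd k ⟨0, hm⟩) (congrFun heq ⟨0, hm⟩)

theorem NOFamily.card_le {F : Finset (Fin m → ℕ)} (hF : NOFamily s n p a b F) :
    F.card ≤ n ^ m :=
  calc F.card ≤ (Fintype.piFinset fun _ : Fin m => range n).card :=
        card_le_card fun l hl => Fintype.mem_piFinset.2 fun i => mem_range.2 ((hF.1 l hl).1 i)
    _ = n ^ m := by simp

theorem NOFamily.card_le_supNO {F : Finset (Fin m → ℕ)} (hF : NOFamily s n p a b F) :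
    F.card ≤ supNO s n p a b :=
  le_csSup ⟨n ^ m, by rintro _ ⟨G, hG, rfl⟩; exact hG.card_le⟩ ⟨F, hF, rfl⟩

end

theorem supNO_append_le (s : ℕ → α) (n : ℕ) {m k : ℕ} (hm : 0 < m)
    (p : Fin m → α) (q : Fin k → α) (a b : ℕ) :
    supNO s n (Fin.append p q) a b ≤ supNO s n p a b := by
  refine csSup_le ⟨0, ∅, ⟨by simp, by simp⟩, rfl⟩ ?_
  rintro _ ⟨F, hF, rfl⟩
  obtain ⟨hG, hcard⟩ := hF.image_prefixOcc hm
  exact hcard ▸ hG.card_le_supNO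

theorem supNOD_append_le (D : List ((ℕ → α) × ℕ)) {m k : ℕ} (hm : 0 < m)
    (p : Fin m → α) (q : Fin k → α) (a b : ℕ) :
    supNOD D (Fin.append p q) a b ≤ supNOD D p a b :=
  List.sum_le_sum fun sn _ => supNO_append_le sn.1 sn.2 hm p q a b

theorem stmt8_general {α : Type*} (D : List ((ℕ → α) × ℕ)) (a b : ℕ)
    {m k j : ℕ} (hm : 0 < m)
    (p : Fin m → α) (r : Fin k → α) (w : Fin j → α)
    (mincf : ℝ) :
    supNOD D (Fin.append (Fin.append p r) w) a b ≤ supNOD D (Fin.append p r) a b ∧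
    supNOD D (Fin.append p r) a b ≤ supNOD D p a b ∧
    ((supNOD D (Fin.append p r) a b : ℝ) / (supNOD D p a b : ℝ) < mincf →
      (supNOD D (Fin.append (Fin.append p r) w) a b : ℝ) / (supNOD D p a b : ℝ) < mincf) := by
  have h_prw := supNOD_append_le D (Nat.lt_add_right k hm) (Fin.append p r) w a b
  refine ⟨h_prw, supNOD_append_le D hm p r a b, fun h_weak => lt_of_le_of_lt ?_ h_weak⟩
  gcongr

/-- sup(p·r·w, D) ≤ sup(p·r, D) ≤ sup(p, D); consequently if
p → r is not strong then neither is p → r·w. -/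
theorem stmt8 {α : Type*} (D : List ((ℕ → α) × ℕ)) (a b : ℕ)
    {m k j : ℕ} (hm : 0 < m) (hk : 0 < k)
    (p : Fin m → α) (r : Fin k → α) (w : Fin j → α)
    (mincf : ℝ) (hp : 0 < supNOD D p a b) :
    supNOD D (Fin.append (Fin.append p r) w) a b ≤ supNOD D (Fin.append p r) a b ∧
    supNOD D (Fin.append p r) a b ≤ supNOD D p a b ∧
    ((supNOD D (Fin.append p r) a b : ℝ) / (supNOD D p a b : ℝ) < mincf →
      (supNOD D (Fin.append (Fin.append p r) w) a b : ℝ) / (supNOD D p a b : ℝ) < mincf) :=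
  stmt8_general D a b hm p r w mincf
end
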